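/- arXiv:2101.08330 — 7 statements merged into one kernel-verified Lean document; each statement's English description precedes it below -/
import Mathlib

section
/- Let Δ be an irreducible (possibly non-reduced) root system in a finite-dimensional real inner product space E. If α, β ∈ Δ and α + β ∈ Δ, then one of the following holds: (a) ‖α‖ = ‖β‖ < ‖α+β‖; (b) ‖α+β‖ = ‖α‖ < ‖β‖, or ‖α+β‖ = ‖β‖ < ‖α‖; (c) ‖α‖ = ‖β‖ = ‖α+β‖. (Lemma on root lengths, Lemma 4.3 of the paper.) -/
open RealInnerProductSpace

/-! Write `t = ⟪α, β⟫` and use `‖α + β‖² = ‖α‖² + 2t + ‖β‖²`. If `t ≥ 0`, the Cartan integers of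
`α` and `β` against `α + β` are positive and sum to `2`, so both equal `1`; this forces
`‖α‖ = ‖β‖` and `‖α + β‖² = 2‖α‖² + 2t`. If `t < 0`, the Cartan integers `2t / ‖α‖²` and
`2t / ‖β‖²` are negative, hence each is `-1` or at most `-2`; they cannot both be at most `-2`
since `‖α + β‖² > 0`, and a value `-1` of `2t / ‖α‖²` means exactly `‖α + β‖ = ‖β‖`. -/

theorem eq_neg_or_le_neg_two_mul_of_eq_intCast_mul {a s : ℝ} {n : ℤ} (ha : 0 ≤ a) (hs : s < 0)
    (h : s = n * a) : s = -a ∨ s ≤ -2 * a := by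
  have hn : n ≤ -1 := by
    by_contra! hn
    have : (0 : ℝ) ≤ n := by exact_mod_cast (by omega : (0 : ℤ) ≤ n)
    nlinarith
  rcases hn.eq_or_lt with rfl | hn
  · left
    simpa using h
  · right
    have : (n : ℝ) ≤ -2 := by exact_mod_cast (by omega : n ≤ -2)
    nlinarith

section RootLengths

variable {E : Type*} [NormedAddCommGroup E] [InnerProductSpace ℝ E]

theorem two_inner_eq_mul_norm_sq_of_div_eq {α β : E} (hα : α ≠ 0) {c : ℝ}
    (h : 2 * ⟪β, α⟫ / ⟪α, α⟫ = c) : 2 * ⟪β, α⟫ = c * ‖α‖ ^ 2 := by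
  rwa [div_eq_iff (inner_self_ne_zero.2 hα), real_inner_self_eq_norm_sq] at h

theorem norm_eq_and_lt_norm_add_of_inner_nonneg {α β : E} (hα : α ≠ 0) (hβ : β ≠ 0)
    (ht : 0 ≤ ⟪α, β⟫) (hαγ : ∃ n : ℤ, 2 * ⟪α, α + β⟫ = n * ‖α + β‖ ^ 2)
    (hβγ : ∃ n : ℤ, 2 * ⟪β, α + β⟫ = n * ‖α + β‖ ^ 2) :
    ‖α‖ = ‖β‖ ∧ ‖β‖ < ‖α + β‖ := by
  obtain ⟨m₁, hm₁⟩ := hαγ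
  obtain ⟨m₂, hm₂⟩ := hβγ
  rw [inner_add_right, real_inner_self_eq_norm_sq] at hm₁
  rw [inner_add_right, real_inner_self_eq_norm_sq, real_inner_comm] at hm₂
  have hx : 0 < ‖α‖ ^ 2 := by positivity
  have hy : 0 < ‖β‖ ^ 2 := by positivity
  have hsq := norm_add_sq_real α β
  have hz : 0 < ‖α + β‖ ^ 2 := by linarith
  have hm₁_pos : 0 < m₁ := by
    have : (0 : ℝ) < m₁ := by nlinarith
    exact_mod_cast this
  have hm₂_pos : 0 < m₂ := by
    have : (0 : ℝ) < m₂ := by nlinarith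
    exact_mod_cast this
  have hsum : m₁ + m₂ = 2 := by
    have : ((m₁ + m₂ : ℤ) : ℝ) * ‖α + β‖ ^ 2 = 2 * ‖α + β‖ ^ 2 := by
      push_cast
      linear_combination -hm₁ - hm₂ - 2 * hsq
    exact_mod_cast mul_right_cancel₀ hz.ne' this
  obtain ⟨rfl, rfl⟩ : m₁ = 1 ∧ m₂ = 1 := by omega
  push_cast at hm₁ hm₂
  exact ⟨(sq_eq_sq₀ (norm_nonneg _) (norm_nonneg _)).1 (by linarith),
    (sq_lt_sq₀ (norm_nonneg _) (norm_nonneg _)).1 (by linarith)⟩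

theorem norm_add_eq_norm_of_inner_neg {α β : E} (hγ : α + β ≠ 0) (ht : ⟪α, β⟫ < 0)
    (hαβ : ∃ n : ℤ, 2 * ⟪β, α⟫ = n * ‖α‖ ^ 2) (hβα : ∃ n : ℤ, 2 * ⟪α, β⟫ = n * ‖β‖ ^ 2) :
    ((‖α + β‖ = ‖α‖ ∧ ‖α‖ < ‖β‖) ∨ (‖α + β‖ = ‖β‖ ∧ ‖β‖ < ‖α‖)) ∨
    (‖α‖ = ‖β‖ ∧ ‖β‖ = ‖α + β‖) := by
  obtain ⟨n₁, hn₁⟩ := hαβ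
  obtain ⟨n₂, hn₂⟩ := hβα
  rw [real_inner_comm] at hn₁
  have hsq := norm_add_sq_real α β
  have hz : 0 < ‖α + β‖ ^ 2 := by positivity
  have hs : 2 * ⟪α, β⟫ < 0 := by linarith
  have norm_eq {u v : E} (h : ‖u‖ ^ 2 = ‖v‖ ^ 2) : ‖u‖ = ‖v‖ :=
    (sq_eq_sq₀ (norm_nonneg _) (norm_nonneg _)).1 h
  have norm_lt {u v : E} (h : ‖u‖ ^ 2 < ‖v‖ ^ 2) : ‖u‖ < ‖v‖ :=
    (sq_lt_sq₀ (norm_nonneg _) (norm_nonneg _)).1 h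
  rcases eq_neg_or_le_neg_two_mul_of_eq_intCast_mul (sq_nonneg _) hs hn₁ with h₁ | h₁ <;>
  rcases eq_neg_or_le_neg_two_mul_of_eq_intCast_mul (sq_nonneg _) hs hn₂ with h₂ | h₂
  · exact Or.inr ⟨norm_eq (by linarith), norm_eq (by linarith)⟩
  · exact Or.inl (Or.inr ⟨norm_eq (by linarith), norm_lt (by linarith)⟩)
  · exact Or.inl (Or.inl ⟨norm_eq (by linarith), norm_lt (by linarith)⟩)
  · linarith

end RootLengths

theorem root_length_trichotomy_general {E : Type*} [NormedAddCommGroup E]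
    [InnerProductSpace ℝ E]
    (Δ : Finset E)
    (h0 : (0 : E) ∉ Δ)
    (hint : ∀ α ∈ Δ, ∀ β ∈ Δ, ∃ n : ℤ, 2 * ⟪β, α⟫ / ⟪α, α⟫ = (n : ℝ))
    (α β : E) (hα : α ∈ Δ) (hβ : β ∈ Δ) (hαβ : α + β ∈ Δ) :
    (‖α‖ = ‖β‖ ∧ ‖β‖ < ‖α + β‖) ∨
    ((‖α + β‖ = ‖α‖ ∧ ‖α‖ < ‖β‖) ∨ (‖α + β‖ = ‖β‖ ∧ ‖β‖ < ‖α‖)) ∨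
    (‖α‖ = ‖β‖ ∧ ‖β‖ = ‖α + β‖) := by
  have ne_zero {γ : E} (hγ : γ ∈ Δ) : γ ≠ 0 := fun h => h0 (h ▸ hγ)
  have cartan {γ δ : E} (hγ : γ ∈ Δ) (hδ : δ ∈ Δ) : ∃ n : ℤ, 2 * ⟪δ, γ⟫ = n * ‖γ‖ ^ 2 :=
    (hint γ hγ δ hδ).imp fun _ => two_inner_eq_mul_norm_sq_of_div_eq (ne_zero hγ)
  rcases le_or_gt 0 ⟪α, β⟫ with ht | ht
  · exact Or.inl <| norm_eq_and_lt_norm_add_of_inner_nonneg (ne_zero hα) (ne_zero hβ) ht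
      (cartan hαβ hα) (cartan hαβ hβ)
  · exact Or.inr <| norm_add_eq_norm_of_inner_neg (ne_zero hαβ) ht (cartan hα hβ) (cartan hβ hα)

/-- Lemma 4.3 of the paper: trichotomy of root lengths. If `α`, `β` and `α + β` are
roots of an irreducible (possibly non-reduced) root system `Δ` in a finite-dimensional
real inner product space, then either (a) `‖α‖ = ‖β‖ < ‖α+β‖`, or
(b) `‖α+β‖ = ‖α‖ < ‖β‖` or `‖α+β‖ = ‖β‖ < ‖α‖`, or (c) all three lengths coincide. -/
theorem root_length_trichotomy {E : Type*} [NormedAddCommGroup E]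
    [InnerProductSpace ℝ E] [FiniteDimensional ℝ E]
    (Δ : Finset E)
    (h0 : (0 : E) ∉ Δ)
    (hspan : Submodule.span ℝ (Δ : Set E) = ⊤)
    (hint : ∀ α ∈ Δ, ∀ β ∈ Δ, ∃ n : ℤ, 2 * ⟪β, α⟫ / ⟪α, α⟫ = (n : ℝ))
    (hrefl : ∀ α ∈ Δ, ∀ β ∈ Δ, β - (2 * ⟪β, α⟫ / ⟪α, α⟫) • α ∈ Δ)
    (hirr : ∀ A B : Set E, (Δ : Set E) = A ∪ B → A.Nonempty → B.Nonempty →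
      (∀ a ∈ A, ∀ b ∈ B, ⟪a, b⟫ = 0) → False)
    (α β : E) (hα : α ∈ Δ) (hβ : β ∈ Δ) (hαβ : α + β ∈ Δ) :
    (‖α‖ = ‖β‖ ∧ ‖β‖ < ‖α + β‖) ∨
    ((‖α + β‖ = ‖α‖ ∧ ‖α‖ < ‖β‖) ∨ (‖α + β‖ = ‖β‖ ∧ ‖β‖ < ‖α‖)) ∨
    (‖α‖ = ‖β‖ ∧ ‖β‖ = ‖α + β‖) :=
  root_length_trichotomy_general Δ h0 hint α β hα hβ hαβ
end

section
/- Let α̇, β̇, δ ∈ V, let r be a positive integer and k ∈ {1,2}. Suppose there exist λ ∈ S, strictly increasing positive integers n_1 < n_2 < ⋯ and integers t_1, t_2, … such that λ + 4 n_i (α̇ + β̇) + t_i δ ∈ S for all i ≥ 1. If −k α̇ + k r m δ ∈ ℭ_S for every m ∈ ℤ, then for every integer n* the vector 2 β̇ + (2 n* + 1) r δ does not belong to 𝔅_S. (Combinatorial form of part (i)(a) of the paper's proposition on supports.) -/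
/-- The set `ℭ_S` of vectors `v` with `v + S ⊆ S`. -/
def CM {V : Type*} [AddCommGroup V] [Module ℝ V] (S : Set V) : Set V :=
  {v : V | ∀ s ∈ S, v + s ∈ S}

/-- The set `𝔅_S` of vectors `v` such that for every `λ ∈ S` only finitely many
positive integer multiples of `v` translate `λ` back into `S`. -/
def BM {V : Type*} [AddCommGroup V] [Module ℝ V] (S : Set V) : Set V :=
  {v : V | ∀ lam ∈ S, {n : ℤ | 0 < n ∧ lam + n • v ∈ S}.Finite}

/-- Combinatorial form of part (i)(a) of the paper's Proposition 3.5 on supports. -/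
theorem prop_supports_i_a {V : Type*} [AddCommGroup V] [Module ℝ V]
    (S : Set V) (hS : S.Nonempty)
    (αd βd δ : V) (r : ℤ) (hr : 0 < r) (k : ℤ) (hk : k = 1 ∨ k = 2)
    (lam : V) (hlam : lam ∈ S)
    (n : ℕ → ℤ) (hmono : StrictMono n) (hpos : ∀ i, 0 < n i)
    (t : ℕ → ℤ)
    (hsupp : ∀ i, lam + (4 * n i) • (αd + βd) + (t i) • δ ∈ S)
    (hC : ∀ m : ℤ, (-(k • αd) + (k * r * m) • δ) ∈ CM S) :
    ∀ nstar : ℤ, ((2 : ℤ) • βd + ((2 * nstar + 1) * r) • δ) ∉ BM S := by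
  intro nstar hB
  -- iterated application of hC
  have hA : ∀ (j : ℕ) (M : ℤ) (x : V), x ∈ S →
      x + (-(((j : ℤ) + 1) * k)) • αd + (k * r * M) • δ ∈ S := by
    intro j
    induction j with
    | zero =>
      intro M x hx
      have h1 := hC M x hx
      have e : x + (-((((0 : ℕ) : ℤ) + 1) * k)) • αd + (k * r * M) • δ
          = -(k • αd) + (k * r * M) • δ + x := by
        push_cast
        module
      rw [e]; exact h1
    | succ j ih =>
      intro M x hx
      have h1 := ih M x hx
      have h2 := hC 0 _ h1
      have e : x + (-((((j + 1 : ℕ) : ℤ) + 1) * k)) • αd + (k * r * M) • δ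
          = -(k • αd) + (k * r * 0) • δ + (x + (-(((j : ℤ) + 1) * k)) • αd + (k * r * M) • δ) := by
        push_cast
        module
      rw [e]; exact h2
  -- key membership
  have key : ∀ (i : ℕ) (M : ℤ), lam + (4 * n i) • βd + (t i + k * r * M) • δ ∈ S := by
    intro i M
    have hni := hpos i
    obtain ⟨c2, hc2eq, hc2pos⟩ : ∃ c2 : ℤ, k * c2 = 4 * n i ∧ 0 < c2 := by
      rcases hk with h | h <;> subst h
      · exact ⟨4 * n i, by ring, by omega⟩
      · exact ⟨2 * n i, by ring, by omega⟩
    have h1 := hA (c2 - 1).toNat M _ (hsupp i)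
    have hcast : (((c2 - 1).toNat : ℤ)) = c2 - 1 := Int.toNat_of_nonneg (by omega)
    rw [hcast] at h1
    have e : lam + (4 * n i) • βd + (t i + k * r * M) • δ
        = lam + (4 * n i) • (αd + βd) + (t i) • δ
          + (-((c2 - 1 + 1) * k)) • αd + (k * r * M) • δ := by
      have h4 : (c2 - 1 + 1) * k = 4 * n i := by rw [← hc2eq]; ring
      rw [h4]
      module
    rw [e]; exact h1
  -- pigeonhole on residues of t i mod k*r
  have hkr : 0 < k * r := by rcases hk with h | h <;> subst h <;> omega
  set m : ℕ := (k * r).toNat with hm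
  have hmz : (m : ℤ) = k * r := Int.toNat_of_nonneg (by omega)
  haveI : NeZero m := ⟨by omega⟩
  obtain ⟨c, hc⟩ := Finite.exists_infinite_fiber (fun i : ℕ => ((t i : ZMod m)))
  have hcfib : (((fun i : ℕ => ((t i : ZMod m))) ⁻¹' {c}) : Set ℕ).Infinite :=
    Set.infinite_coe_iff.mp hc
  obtain ⟨i0, hi0'⟩ := hcfib.nonempty
  have hi0 : ((t i0 : ZMod m)) = c := hi0'
  set lam' := lam + (4 * n i0) • βd + (t i0 + k * r * 0) • δ with hlam'
  have hlam'S : lam' ∈ S := key i0 0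
  set T : Set ℕ := ((fun i : ℕ => ((t i : ZMod m))) ⁻¹' {c}) \ Set.Iic i0 with hT
  have hTinf : T.Infinite := hcfib.diff (Set.finite_Iic i0)
  haveI : Infinite T := hTinf.to_subtype
  have hinj : Function.Injective (fun i : T => 2 * (n i.1 - n i0)) := by
    intro a b hab
    simp only [mul_eq_mul_left_iff, sub_left_inj] at hab
    have : n a.1 = n b.1 := by omega
    exact Subtype.ext (hmono.injective this)
  have hmem : ∀ i : T, 2 * (n i.1 - n i0) ∈
      {N : ℤ | 0 < N ∧ lam' + N • ((2 : ℤ) • βd + ((2 * nstar + 1) * r) • δ) ∈ S} := by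
    intro i
    obtain ⟨hifib, hii0⟩ := i.2
    simp only [Set.mem_Iic, not_le] at hii0
    have hlt : n i0 < n i.1 := hmono hii0
    constructor
    · omega
    · -- divisibility
      have hfib : ((t i.1 : ZMod m)) = ((t i0 : ZMod m)) := by
        have := Set.mem_preimage.mp hifib
        simp only [Set.mem_singleton_iff] at this
        rw [this, ← hi0]
      have hd1 : (m : ℤ) ∣ t i.1 - t i0 := by
        rw [← ZMod.intCast_zmod_eq_zero_iff_dvd]
        push_cast
        rw [hfib]
        ring
      have hd1' : k * r ∣ t i0 - t i.1 := by
        rw [← hmz]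
        exact (dvd_sub_comm.mp hd1)
      have hd2 : k * r ∣ 2 * (n i.1 - n i0) * (2 * nstar + 1) * r := by
        rcases hk with h | h <;> subst h
        · exact ⟨2 * (n i.1 - n i0) * (2 * nstar + 1), by ring⟩
        · exact ⟨(n i.1 - n i0) * (2 * nstar + 1), by ring⟩
      obtain ⟨M, hM⟩ := hd1'.add hd2
      have hδ : t i.1 + k * r * M = t i0 + 2 * (n i.1 - n i0) * (2 * nstar + 1) * r := by
        linarith [hM]
      have h1 := key i.1 M
      rw [hδ] at h1
      have e : lam' + (2 * (n i.1 - n i0)) • ((2 : ℤ) • βd + ((2 * nstar + 1) * r) • δ)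
          = lam + (4 * n i.1) • βd + (t i0 + 2 * (n i.1 - n i0) * (2 * nstar + 1) * r) • δ := by
        rw [hlam']
        module
      rw [e]; exact h1
  exact Set.infinite_of_injective_forall_mem hinj hmem (hB lam' hlam'S)
end

section
/- Let α̇, β̇, δ ∈ V, let r be a positive integer and k ∈ {1,2}. Suppose there exist λ ∈ S, strictly increasing positive integers n_1 < n_2 < ⋯ and integers t_1, t_2, … such that λ + 4 n_i (α̇ + β̇) + t_i δ ∈ S for all i ≥ 1. If −(2 β̇ + r δ) + 2 r m δ ∈ ℭ_S for every m ∈ ℤ, then for every integer n* the vector k(α̇ + r n* δ) does not belong to 𝔅_S. (Combinatorial form of part (i)(b) of the paper's proposition on supports.) -/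
/-- Combinatorial form of part (i)(b) of the paper's Proposition 3.5 on supports. -/
theorem prop_supports_i_b {V : Type*} [AddCommGroup V] [Module ℝ V]
    (S : Set V) (hS : S.Nonempty)
    (αd βd δ : V) (r : ℤ) (hr : 0 < r) (k : ℤ) (hk : k = 1 ∨ k = 2)
    (lam : V) (hlam : lam ∈ S)
    (n : ℕ → ℤ) (hmono : StrictMono n) (hpos : ∀ i, 0 < n i)
    (t : ℕ → ℤ)
    (hsupp : ∀ i, lam + (4 * n i) • (αd + βd) + (t i) • δ ∈ S)
    (hC : ∀ m : ℤ, (-((2 : ℤ) • βd + r • δ) + (2 * r * m) • δ) ∈ CM S) :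
    ∀ nstar : ℤ, k • (αd + (r * nstar) • δ) ∉ BM S := by
  intro nstar hBM
  -- Key: adding `2 * n i` elements of `ℭ_S` kills the `βd` part.
  have step : ∀ i : ℕ, ∀ j : ℕ, ∀ M : ℤ,
      lam + (4 * n i) • (αd + βd) + (t i) • δ
        + ((j : ℤ) + 1) • (-(((2 : ℤ) • βd + r • δ))) + (2 * r * M) • δ ∈ S := by
    intro i j
    induction j with
    | zero =>
        intro M
        have h := hC M _ (hsupp i)
        have : -((2 : ℤ) • βd + r • δ) + (2 * r * M) • δ
            + (lam + (4 * n i) • (αd + βd) + (t i) • δ)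
            = lam + (4 * n i) • (αd + βd) + (t i) • δ
              + (((0 : ℕ) : ℤ) + 1) • (-(((2 : ℤ) • βd + r • δ))) + (2 * r * M) • δ := by
          module
        rwa [this] at h
    | succ j ih =>
        intro M
        have h := hC 0 _ (ih M)
        have : -((2 : ℤ) • βd + r • δ) + (2 * r * 0) • δ
            + (lam + (4 * n i) • (αd + βd) + (t i) • δ
              + ((j : ℤ) + 1) • (-(((2 : ℤ) • βd + r • δ))) + (2 * r * M) • δ)
            = lam + (4 * n i) • (αd + βd) + (t i) • δ
              + (((j + 1 : ℕ) : ℤ) + 1) • (-(((2 : ℤ) • βd + r • δ))) + (2 * r * M) • δ := by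
          push_cast
          module
        rwa [this] at h
  have key : ∀ i : ℕ, ∀ M : ℤ, lam + (4 * n i) • αd + (t i + 2 * r * M) • δ ∈ S := by
    intro i M
    have h := step i (2 * n i - 1).toNat (M + n i)
    have hn : (((2 * n i - 1).toNat : ℤ) + 1) = 2 * n i := by
      have := hpos i; omega
    rw [hn] at h
    have : lam + (4 * n i) • (αd + βd) + (t i) • δ
        + (2 * n i) • (-(((2 : ℤ) • βd + r • δ))) + (2 * r * (M + n i)) • δ
        = lam + (4 * n i) • αd + (t i + 2 * r * M) • δ := by
      module
    rwa [this] at h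
  -- pigeonhole on the residue of `t i` mod `2r`
  set m : ℕ := (2 * r).toNat with hm
  have hm0 : (m : ℤ) = 2 * r := by omega
  haveI : NeZero m := ⟨by omega⟩
  obtain ⟨c, hc⟩ := Finite.exists_infinite_fiber (fun i : ℕ => ((t i : ZMod m)))
  have hJ : ((fun i : ℕ => ((t i : ZMod m))) ⁻¹' {c}).Infinite :=
    Set.infinite_coe_iff.mp hc
  obtain ⟨i0, hi0⟩ := hJ.nonempty
  -- the base point
  set lam' : V := lam + (4 * n i0) • αd + (t i0) • δ with hlam'
  have hlam'S : lam' ∈ S := by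
    have := key i0 0
    simpa using this
  -- q := 4 / k
  obtain ⟨q, hq, hkq⟩ : ∃ q : ℤ, 0 < q ∧ k * q = 4 := by
    rcases hk with rfl | rfl
    · exact ⟨4, by norm_num, by norm_num⟩
    · exact ⟨2, by norm_num, by norm_num⟩
  -- the infinite family of good multiples
  have hmem : ∀ i ∈ ((fun i : ℕ => ((t i : ZMod m))) ⁻¹' {c}) \ Set.Iic i0,
      q * (n i - n i0) ∈ {N : ℤ | 0 < N ∧ lam' + N • (k • (αd + (r * nstar) • δ)) ∈ S} := by
    intro i hi
    obtain ⟨hi1, hi2⟩ := hi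
    have hii0 : i0 < i := by simpa using hi2
    have hnn : n i0 < n i := hmono hii0
    constructor
    · have h0 : 0 < n i - n i0 := by omega
      exact mul_pos hq h0
    · -- divisibility of t i0 - t i
      have hdvd : (2 * r) ∣ (t i0 - t i) := by
        have h1 : ((t i : ZMod m)) = ((t i0 : ZMod m)) := by
          have ha : ((t i : ZMod m)) = c := Set.mem_singleton_iff.mp (Set.mem_preimage.mp hi1)
          have hb : ((t i0 : ZMod m)) = c := Set.mem_singleton_iff.mp (Set.mem_preimage.mp hi0)
          rw [ha, hb]
        have h2 : ((t i0 - t i : ℤ) : ZMod m) = 0 := by push_cast [h1]; ring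
        have := (ZMod.intCast_zmod_eq_zero_iff_dvd _ m).mp h2
        rwa [hm0] at this
      obtain ⟨d, hd⟩ := hdvd
      have h := key i (d + 2 * (n i - n i0) * nstar)
      have : lam + (4 * n i) • αd + (t i + 2 * r * (d + 2 * (n i - n i0) * nstar)) • δ
          = lam' + (q * (n i - n i0)) • (k • (αd + (r * nstar) • δ)) := by
        rw [hlam']
        have htv : t i + 2 * r * (d + 2 * (n i - n i0) * nstar)
            = t i0 + 4 * (n i - n i0) * (r * nstar) := by
          have : t i0 = t i + 2 * r * d := by omega
          rw [this]; ring
        rw [htv]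
        have h4 : q * (n i - n i0) * k = 4 * (n i - n i0) := by
          have : k * q = 4 := hkq
          nlinarith [hkq]
        have expand : (q * (n i - n i0)) • (k • (αd + (r * nstar) • δ))
            = (4 * (n i - n i0)) • αd + (4 * (n i - n i0) * (r * nstar)) • δ := by
          rw [smul_smul, h4]
          module
        rw [expand]
        module
      rw [this] at h
      exact h
  -- conclude infinitude
  have hset : ({N : ℤ | 0 < N ∧ lam' + N • (k • (αd + (r * nstar) • δ)) ∈ S}).Infinite := by
    have hJi : (((fun i : ℕ => ((t i : ZMod m))) ⁻¹' {c}) \ Set.Iic i0).Infinite :=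
      hJ.diff (Set.finite_Iic i0)
    have hinj : Set.InjOn (fun i => q * (n i - n i0))
        (((fun i : ℕ => ((t i : ZMod m))) ⁻¹' {c}) \ Set.Iic i0) := by
      intro a _ b _ hab
      simp only at hab
      have : n a = n b := by
        have hq' : q ≠ 0 := by omega
        have := mul_left_cancel₀ hq' hab
        omega
      exact hmono.injective this
    have himg := (hJi.image hinj)
    exact himg.mono (by
      rintro x ⟨i, hi, rfl⟩
      exact hmem i hi)
  exact hset (hBM lam' hlam'S)
end

section
/- Let α̇, β̇, δ ∈ V, let r be a positive integer and k ∈ {1,2}. Suppose there exist λ ∈ S, strictly increasing positive integers n_1 < n_2 < ⋯ and integers t_1, t_2, … such that λ + 4 n_i (α̇ + β̇) + t_i δ ∈ S for all i ≥ 1, and suppose −k α̇ + k r m δ ∈ ℭ_S for every m ∈ ℤ. Then for every integer n* there exist μ ∈ S and strictly increasing positive integers m_1 < m_2 < ⋯ such that μ + (2 m_j − 1) k α̇ + 2 m_j (2 β̇ + (2 n* + 1) r δ) ∈ S for all j ≥ 1. (The support-chain construction in part (ii)(a) of the paper's proposition on supports.) -/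
/-- The support-chain construction in part (ii)(a) of the paper's Proposition 3.5
on supports. -/
theorem prop_supports_ii_a_chain {V : Type*} [AddCommGroup V] [Module ℝ V]
    (S : Set V) (hS : S.Nonempty)
    (αd βd δ : V) (r : ℤ) (hr : 0 < r) (k : ℤ) (hk : k = 1 ∨ k = 2)
    (lam : V) (hlam : lam ∈ S)
    (n : ℕ → ℤ) (hmono : StrictMono n) (hpos : ∀ i, 0 < n i)
    (t : ℕ → ℤ)
    (hsupp : ∀ i, lam + (4 * n i) • (αd + βd) + (t i) • δ ∈ S)
    (hC : ∀ m : ℤ, (-(k • αd) + (k * r * m) • δ) ∈ CM S) :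
    ∀ nstar : ℤ, ∃ μ ∈ S, ∃ m : ℕ → ℤ, StrictMono m ∧ (∀ j, 0 < m j) ∧
      ∀ j, μ + ((2 * m j - 1) * k) • αd
        + (2 * m j) • ((2 : ℤ) • βd + ((2 * nstar + 1) * r) • δ) ∈ S := by
  intro nstar
  have hkpos : 0 < k := by rcases hk with h | h <;> omega
  have hkr : (0 : ℤ) < k * r := mul_pos hkpos hr
  have hKz : (((k * r).toNat : ℤ)) = k * r := Int.toNat_of_nonneg hkr.le
  haveI : NeZero (k * r).toNat := ⟨by omega⟩
  -- pigeonhole on residues of t i mod k*r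
  obtain ⟨c, hc⟩ :=
    Finite.exists_infinite_fiber (fun i : ℕ => ((t i : ZMod (k * r).toNat)))
  have hinf : {i : ℕ | ((t i : ZMod (k * r).toNat)) = c}.Infinite := by
    rw [← Set.infinite_coe_iff]
    exact hc
  set p : ℕ → Prop := fun i => ((t i : ZMod (k * r).toNat)) = c with hp
  have hidxmono : StrictMono (Nat.nth p) := Nat.nth_strictMono hinf
  have hidxmem : ∀ j, ((t (Nat.nth p j) : ZMod (k * r).toNat)) = c := fun j =>
    Nat.nth_mem_of_infinite hinf j
  have hdvd : ∀ j, (k * r) ∣ (t (Nat.nth p 0) - t (Nat.nth p j)) := by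
    intro j
    have h1 : ((t (Nat.nth p 0) : ZMod (k * r).toNat)) =
        ((t (Nat.nth p j) : ZMod (k * r).toNat)) := (hidxmem 0).trans (hidxmem j).symm
    rw [ZMod.intCast_eq_intCast_iff] at h1
    have := (Int.ModEq.dvd h1)
    rw [hKz] at this
    have h2 := dvd_neg.mpr this
    rwa [neg_sub] at h2
  -- closure under repeated addition of CM elements
  have closure : ∀ q : ℤ, 1 ≤ q → ∀ N : ℤ, ∀ s ∈ S,
      ((-(q * k)) • αd + (k * r * N) • δ) + s ∈ S := by
    refine Int.le_induction ?_ ?_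
    · intro N s hs
      have := hC N s hs
      rw [one_mul, neg_smul]
      exact this
    · intro q hq ih N s hs
      have h1 := ih N s hs
      have h2 := hC 0 _ h1
      convert h2 using 1
      module
  refine ⟨lam + (4 * n (Nat.nth p 0)) • (αd + βd) + (t (Nat.nth p 0)) • δ,
    hsupp (Nat.nth p 0),
    fun j => n (Nat.nth p (j + 1)) - n (Nat.nth p 0), ?_, ?_, ?_⟩
  · intro a b hab
    exact sub_lt_sub_right (hmono (hidxmono (by omega))) _
  · intro j
    have : n (Nat.nth p 0) < n (Nat.nth p (j + 1)) := hmono (hidxmono (by omega))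
    simpa using this
  · intro j
    simp only []
    set M : ℤ := n (Nat.nth p (j + 1)) - n (Nat.nth p 0) with hM
    have hMpos : 0 < M := by
      have : n (Nat.nth p 0) < n (Nat.nth p (j + 1)) := hmono (hidxmono (by omega))
      simp [hM]; omega
    obtain ⟨w, hw⟩ := hdvd (j + 1)
    have hn : n (Nat.nth p (j + 1)) = n (Nat.nth p 0) + M := by rw [hM]; ring
    rcases hk with hk1 | hk2
    · subst hk1
      have ht : t (Nat.nth p (j + 1)) = t (Nat.nth p 0) - r * w := by
        rw [one_mul] at hw; omega
      have h := closure (2 * M + 1) (by omega) (w + 2 * M * (2 * nstar + 1)) _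
        (hsupp (Nat.nth p (j + 1)))
      rw [hn, ht] at h
      convert h using 1
      module
    · subst hk2
      have ht : t (Nat.nth p (j + 1)) = t (Nat.nth p 0) - 2 * r * w := by omega
      have h := closure 1 le_rfl (w + M * (2 * nstar + 1)) _
        (hsupp (Nat.nth p (j + 1)))
      rw [hn, ht] at h
      convert h using 1
      module
end

section
/- Let α̇, β̇, δ ∈ V and let r be a positive integer. Suppose there exist λ ∈ S, strictly increasing positive integers n_1 < n_2 < ⋯ and integers t_1, t_2, … such that λ + 4 n_i (α̇ + β̇) + t_i δ ∈ S for all i ≥ 1, and suppose −(2 β̇ + r δ) + 2 r m δ ∈ ℭ_S for every m ∈ ℤ. Then for every integer n* there exist μ ∈ S and strictly increasing positive integers m_1 < m_2 < ⋯ such that μ + (2 m_j − 1)(2 β̇ + r δ) + 2 m_j (2 α̇ + 2 r n* δ) ∈ S for all j ≥ 1. (The support-chain construction in part (ii)(b) of the paper's proposition on supports.) -/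
/-- The support-chain construction in part (ii)(b) of the paper's Proposition 3.5
on supports. -/
theorem prop_supports_ii_b_chain {V : Type*} [AddCommGroup V] [Module ℝ V]
    (S : Set V) (hS : S.Nonempty)
    (αd βd δ : V) (r : ℤ) (hr : 0 < r)
    (lam : V) (hlam : lam ∈ S)
    (n : ℕ → ℤ) (hmono : StrictMono n) (hpos : ∀ i, 0 < n i)
    (t : ℕ → ℤ)
    (hsupp : ∀ i, lam + (4 * n i) • (αd + βd) + (t i) • δ ∈ S)
    (hC : ∀ m : ℤ, (-((2 : ℤ) • βd + r • δ) + (2 * r * m) • δ) ∈ CM S) :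
    ∀ nstar : ℤ, ∃ μ ∈ S, ∃ m : ℕ → ℤ, StrictMono m ∧ (∀ j, 0 < m j) ∧
      ∀ j, μ + (2 * m j - 1) • ((2 : ℤ) • βd + r • δ)
        + (2 * m j) • ((2 : ℤ) • αd + (2 * r * nstar) • δ) ∈ S := by
  intro nstar
  -- N = 2r as a natural number
  set N : ℕ := (2 * r).toNat with hN
  have hN0 : (N : ℤ) = 2 * r := Int.toNat_of_nonneg (by omega)
  haveI : NeZero N := ⟨by omega⟩
  -- pigeonhole: some residue class mod 2r contains t i for infinitely many i
  obtain ⟨y, hy⟩ := Finite.exists_infinite_fiber (fun i : ℕ => ((t i : ZMod N)))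
  have hinf : {i : ℕ | ((t i : ZMod N)) = y}.Infinite := by
    rw [← Set.infinite_coe_iff]; exact hy
  set p : ℕ → Prop := fun i => ((t i : ZMod N)) = y with hp
  have hps : StrictMono (Nat.nth p) := Nat.nth_strictMono hinf
  have hpm : ∀ j, p (Nat.nth p j) := fun j => Nat.nth_mem_of_infinite hinf j
  set i₀ : ℕ := Nat.nth p 0 with hi₀
  refine ⟨lam + (4 * n i₀) • (αd + βd) + (t i₀) • δ, hsupp i₀,
    fun j => n (Nat.nth p (j + 1)) - n i₀, ?_, ?_, ?_⟩
  · intro a b hab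
    have := hmono (hps (by omega : a+1 < b+1))
    simp only [hi₀]
    omega
  · intro j
    have := hmono (hps (by omega : 0 < j+1))
    simp only [hi₀]
    omega
  · intro j
    set i : ℕ := Nat.nth p (j + 1) with hi
    -- t i ≡ t i₀ mod 2r
    have hcast : ((t i₀ : ZMod N)) = ((t i : ZMod N)) := (hpm 0).trans (hpm (j+1)).symm
    have hdvd : (N : ℤ) ∣ t i - t i₀ := (ZMod.intCast_eq_intCast_iff _ _ _).mp hcast |>.dvd
    obtain ⟨q, hq⟩ := hdvd
    rw [hN0] at hq
    set m : ℤ := n i - n i₀ with hm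
    have hti : t i = t i₀ + 2 * r * q := by omega
    have h := hC (-q + m + 2 * m * nstar) _ (hsupp i)
    have heq : lam + (4 * n i₀) • (αd + βd) + (t i₀) • δ
        + (2 * m - 1) • ((2 : ℤ) • βd + r • δ)
        + (2 * m) • ((2 : ℤ) • αd + (2 * r * nstar) • δ)
        = -((2 : ℤ) • βd + r • δ) + (2 * r * (-q + m + 2 * m * nstar)) • δ
          + (lam + (4 * n i) • (αd + βd) + (t i) • δ) := by
      rw [hti]
      have hni : n i = n i₀ + m := by omega
      rw [hni]
      module
    rw [heq]
    exact h
end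

section
/- Assume: (1) X_i∘E = E∘X_i and X_i∘F = F∘X_i for all 1 ≤ i ≤ t; (2) F is injective and each X_i is injective; (3) for every n⃗ ∈ ℤ^t the set {m ∈ ℤ : M_{(m,n⃗)} ≠ 0} is bounded above; (4) there exist positive integers s_1 < s_2 < ⋯ such that M_{(s_n,(s_n+1,…,s_n+1))} ≠ 0 for all n ≥ 1. Then the dimensions of the homogeneous components of M are unbounded: for every N ∈ ℕ there exist m ∈ ℤ and n⃗ ∈ ℤ^t with dim_ℂ M_{(m,n⃗)} ≥ N. (Operator-theoretic form of the paper's key unboundedness theorem, proved via sl₂ Casimir eigenvalue analysis.) -/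
/-!
On the degree-`m` part, `F E + m² + (c₀ + 1) m` plays the role of the `sl₂` Casimir: its
eigenvalues are carried along by `E`, `F` and the `Xᵢ`. As degrees are bounded above, the
`E`-string through an eigenvector ends at some degree `μ ≥ m`, where `F E` vanishes, so the
eigenvalue is `μ² + (c₀ + 1) μ`. The nonzero component at `(sⱼ, sⱼ + 1, …)` yields such a value
with `μ ≥ sⱼ`; moving it down to degree `s₀` with the injective `F` and up with the injective `Xᵢ`,
the component `(s₀, s_J + 1, …)` carries eigenvectors for `N` distinct values once `J` is large,
because `μ ↦ μ² + (c₀ + 1) μ` is injective on `μ > ‖c₀‖`.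
-/

open Module

theorem infinite_setOf_lt_inter_range {s μ : ℕ → ℤ} (hs : StrictMono s) (hsμ : ∀ j, s j ≤ μ j)
    (r : ℝ) : ({a : ℤ | r < a} ∩ Set.range μ).Infinite := by
  have hgrow : ∀ j : ℕ, s 0 + j ≤ s j := fun j => by
    induction j with
    | zero => simp
    | succ j ih => have := hs (Nat.lt_add_one j); push_cast; omega
  refine Set.infinite_of_not_bddAbove fun ⟨b, hb⟩ => ?_
  obtain ⟨j, hj⟩ : ∃ j : ℕ, max b ⌈r⌉ < s 0 + j := ⟨(max b ⌈r⌉ - s 0).toNat + 1, by omega⟩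
  have hμj := (hgrow j).trans (hsμ j)
  have hr : r < μ j := (Int.le_ceil r).trans_lt (by exact_mod_cast (by omega : ⌈r⌉ < μ j))
  have := hb ⟨hr, j, rfl⟩
  omega

theorem monotone_of_le_add_single {ι α : Type*} [Finite ι] [DecidableEq ι] [Preorder α]
    {f : (ι → ℤ) → α} (h : ∀ n i, f n ≤ f (n + Pi.single i 1)) : Monotone f := by
  have hsingle : ∀ n i, Monotone fun k : ℤ => f (n + (Pi.single i k : ι → ℤ)) := fun n i =>
    monotone_int_of_le_succ fun k => by
      simpa only [Pi.single_add, ← add_assoc] using h (n + Pi.single i k) i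
  have hnat : ∀ d : ι → ℕ, ∀ n, f n ≤ f (n + fun i => (d i : ℤ)) := by
    intro d
    induction d using Pi.single_induction with
    | zero => intro n; convert le_refl (f n); ext; simp
    | add d e hd he =>
      intro n
      convert (hd n).trans (he (n + fun i => (d i : ℤ))) using 2
      ext; simp [add_assoc]
    | single i k =>
      intro n
      convert hsingle n i (Nat.cast_nonneg k) using 2
      · simp
      · ext j; by_cases hj : j = i <;> simp [hj]
  intro n n' hle
  convert hnat (fun i => (n' i - n i).toNat) n
  ext i
  simp only [Pi.add_apply, Int.toNat_of_nonneg (sub_nonneg.2 (hle i)), add_sub_cancel]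

theorem Module.End.exists_hasEigenvector_of_mapsTo {K V : Type*} [Field K] [IsAlgClosed K]
    [AddCommGroup V] [Module K V] {f : End K V} {P : Submodule K V} [FiniteDimensional K P]
    (hP : P ≠ ⊥) (hfP : ∀ v ∈ P, f v ∈ P) : ∃ μ, ∃ v ∈ P, f.HasEigenvector μ v := by
  have : Nontrivial P := Submodule.nontrivial_iff_ne_bot.mpr hP
  obtain ⟨μ, hμ⟩ := Module.End.exists_eigenvalue (f.restrict hfP)
  obtain ⟨v, hv⟩ := hμ.exists_hasEigenvector
  refine ⟨μ, v, v.2, hasEigenvector_iff.mpr ⟨?_, by simpa using hv.2⟩⟩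
  simpa [LinearMap.restrict_apply] using congrArg Subtype.val hv.apply_eq_smul

def casimirShift (c₀ : ℂ) (m : ℤ) : ℂ := m ^ 2 + (c₀ + 1) * m

theorem casimirShift_sub_casimirShift_sub_one (c₀ : ℂ) (m : ℤ) :
    casimirShift c₀ m - casimirShift c₀ (m - 1) = c₀ + 2 * m := by
  simp only [casimirShift]; push_cast; ring

theorem casimirShift_injOn (c₀ : ℂ) : Set.InjOn (casimirShift c₀) {a : ℤ | ‖c₀‖ < a} := by
  intro a ha b hb hab
  have hfactor : ((a : ℂ) - b) * (a + b + c₀ + 1) = 0 := by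
    simp only [casimirShift] at hab; linear_combination hab
  rcases mul_eq_zero.mp hfactor with h | h
  · exact_mod_cast sub_eq_zero.mp h
  · have hre : (a : ℝ) + b + c₀.re + 1 = 0 := by simpa using congrArg Complex.re h
    have hc₀ : -‖c₀‖ ≤ c₀.re := neg_le_of_abs_le (Complex.abs_re_le_norm c₀)
    have ha' : ‖c₀‖ < (a : ℝ) := ha
    have hb' : ‖c₀‖ < (b : ℝ) := hb
    exfalso
    linarith [norm_nonneg c₀]

section Casimir

variable {M : Type*} [AddCommGroup M] [Module ℂ M]

def HasCasimirValue (E F : M →ₗ[ℂ] M) (c₀ : ℂ) (m : ℤ) (c : ℂ) (v : M) : Prop :=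
  F (E v) = (c - casimirShift c₀ m) • v

def casimirSpectrum (E F : M →ₗ[ℂ] M) (c₀ : ℂ) (V : ℤ → Submodule ℂ M) (m : ℤ) : Set ℂ :=
  {c | ∃ v ∈ V m, v ≠ 0 ∧ HasCasimirValue E F c₀ m c v}

variable {E F : M →ₗ[ℂ] M} {c₀ c : ℂ} {m : ℤ} {v : M}

theorem HasCasimirValue.lower (hcomm : E (F v) - F (E v) = (c₀ + 2 * m) • v)
    (hv : HasCasimirValue E F c₀ m c v) : HasCasimirValue E F c₀ (m - 1) c (F v) := by
  have hEF : E (F v) = F (E v) + (c₀ + 2 * m) • v := by rw [← hcomm]; abel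
  unfold HasCasimirValue at *
  rw [hEF, map_add, hv, map_smul, map_smul, ← add_smul,
    ← casimirShift_sub_casimirShift_sub_one c₀ m]
  congr 1; ring

theorem HasCasimirValue.raise (hcomm : E (F (E v)) - F (E (E v)) = (c₀ + 2 * (m + 1)) • E v)
    (hv : HasCasimirValue E F c₀ m c v) : HasCasimirValue E F c₀ (m + 1) c (E v) := by
  have hstep := casimirShift_sub_casimirShift_sub_one c₀ (m + 1)
  push_cast at hstep
  rw [add_sub_cancel_right] at hstep
  unfold HasCasimirValue at *
  rw [hv, map_smul] at hcomm
  calc F (E (E v)) = (c - casimirShift c₀ m) • E v - (c₀ + 2 * (m + 1)) • E v := by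
        rw [← hcomm]; abel
    _ = (c - casimirShift c₀ (m + 1)) • E v := by rw [← sub_smul, ← hstep]; congr 1; ring

variable {V : ℤ → Submodule ℂ M}

theorem HasCasimirValue.pow_lower (hF : ∀ m, ∀ v ∈ V m, F v ∈ V (m - 1))
    (hcomm : ∀ m, ∀ v ∈ V m, E (F v) - F (E v) = (c₀ + 2 * (m : ℂ)) • v)
    (hvV : v ∈ V m) (hv : HasCasimirValue E F c₀ m c v) (k : ℕ) :
    (F ^ k) v ∈ V (m - k) ∧ HasCasimirValue E F c₀ (m - k) c ((F ^ k) v) := by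
  induction k with
  | zero => simpa using ⟨hvV, hv⟩
  | succ k ih =>
    rw [pow_succ', Module.End.mul_apply, Nat.cast_succ, ← sub_sub]
    exact ⟨hF _ _ ih.1, ih.2.lower (hcomm _ _ ih.1)⟩

theorem HasCasimirValue.pow_raise (hE : ∀ m, ∀ v ∈ V m, E v ∈ V (m + 1))
    (hcomm : ∀ m, ∀ v ∈ V m, E (F v) - F (E v) = (c₀ + 2 * (m : ℂ)) • v)
    (hvV : v ∈ V m) (hv : HasCasimirValue E F c₀ m c v) (k : ℕ) :
    (E ^ k) v ∈ V (m + k) ∧ HasCasimirValue E F c₀ (m + k) c ((E ^ k) v) := by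
  induction k with
  | zero => simpa using ⟨hvV, hv⟩
  | succ k ih =>
    rw [pow_succ', Module.End.mul_apply, Nat.cast_succ, ← add_assoc]
    refine ⟨hE _ _ ih.1, ih.2.raise ?_⟩
    simpa using hcomm _ _ (hE _ _ ih.1)

theorem HasCasimirValue.exists_eq_casimirShift (hE : ∀ m, ∀ v ∈ V m, E v ∈ V (m + 1))
    (hcomm : ∀ m, ∀ v ∈ V m, E (F v) - F (E v) = (c₀ + 2 * (m : ℂ)) • v)
    (hbdd : BddAbove {m | V m ≠ ⊥}) (hvV : v ∈ V m) (hv0 : v ≠ 0)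
    (hv : HasCasimirValue E F c₀ m c v) : ∃ μ, m ≤ μ ∧ c = casimirShift c₀ μ := by
  obtain ⟨b, hb⟩ := hbdd
  have hvanish : (E ^ ((b - m).toNat + 1)) v = 0 := by
    have hmem := (hv.pow_raise hE hcomm hvV ((b - m).toNat + 1)).1
    have hbot : V (m + ((b - m).toNat + 1 : ℕ)) = ⊥ := by
      by_contra hne
      have := hb hne
      omega
    rw [hbot] at hmem
    exact (Submodule.mem_bot ℂ).mp hmem
  obtain ⟨k, hk0, hk1⟩ := Nat.exists_not_and_succ_of_not_zero_of_exists
    (p := fun k => (E ^ k) v = 0) (by simpa using hv0) ⟨_, hvanish⟩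
  refine ⟨m + k, by omega, ?_⟩
  have hzero : (c - casimirShift c₀ (m + k)) • (E ^ k) v = 0 := by
    rw [← (hv.pow_raise hE hcomm hvV k).2, ← Module.End.mul_apply E, ← pow_succ', hk1, map_zero]
  exact sub_eq_zero.mp ((smul_eq_zero.mp hzero).resolve_right hk0)

theorem casimirSpectrum_nonempty (hE : ∀ m, ∀ v ∈ V m, E v ∈ V (m + 1))
    (hF : ∀ m, ∀ v ∈ V m, F v ∈ V (m - 1)) [FiniteDimensional ℂ (V m)] (hne : V m ≠ ⊥) :
    (casimirSpectrum E F c₀ V m).Nonempty := by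
  obtain ⟨μ, v, hvV, hv⟩ := Module.End.exists_hasEigenvector_of_mapsTo (f := F ∘ₗ E) hne
    fun v hv => by simpa using hF _ _ (hE m v hv)
  refine ⟨μ + casimirShift c₀ m, v, hvV, hv.2, ?_⟩
  simpa [HasCasimirValue] using hv.apply_eq_smul

theorem exists_eq_casimirShift_of_mem_casimirSpectrum (hE : ∀ m, ∀ v ∈ V m, E v ∈ V (m + 1))
    (hcomm : ∀ m, ∀ v ∈ V m, E (F v) - F (E v) = (c₀ + 2 * (m : ℂ)) • v)
    (hbdd : BddAbove {m | V m ≠ ⊥}) (hc : c ∈ casimirSpectrum E F c₀ V m) :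
    ∃ μ, m ≤ μ ∧ c = casimirShift c₀ μ :=
  let ⟨_, hvV, hv0, hv⟩ := hc
  hv.exists_eq_casimirShift hE hcomm hbdd hvV hv0

theorem casimirSpectrum_antitone (hF : ∀ m, ∀ v ∈ V m, F v ∈ V (m - 1))
    (hcomm : ∀ m, ∀ v ∈ V m, E (F v) - F (E v) = (c₀ + 2 * (m : ℂ)) • v)
    (hFinj : Function.Injective F) : Antitone (casimirSpectrum E F c₀ V) := by
  rintro m' m hle c ⟨v, hvV, hv0, hv⟩
  obtain ⟨k, rfl⟩ : ∃ k : ℕ, m' = m - k := ⟨(m - m').toNat, by omega⟩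
  have hFk : Function.Injective (F ^ k) := Module.End.coe_pow F k ▸ hFinj.iterate k
  obtain ⟨hkV, hk⟩ := hv.pow_lower hF hcomm hvV k
  exact ⟨_, hkV, (LinearMap.map_eq_zero_iff _ hFk).not.mpr hv0, hk⟩

theorem casimirSpectrum_subset_of_commute {V' : ℤ → Submodule ℂ M} {G : M →ₗ[ℂ] M}
    (hG : ∀ v ∈ V m, G v ∈ V' m) (hGE : G ∘ₗ E = E ∘ₗ G) (hGF : G ∘ₗ F = F ∘ₗ G)
    (hGinj : Function.Injective G) :
    casimirSpectrum E F c₀ V m ⊆ casimirSpectrum E F c₀ V' m := by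
  rintro c ⟨v, hvV, hv0, hv⟩
  refine ⟨G v, hG v hvV, (LinearMap.map_eq_zero_iff _ hGinj).not.mpr hv0, ?_⟩
  calc F (E (G v)) = G (F (E v)) := by
        rw [← LinearMap.comp_apply E G, ← hGE, LinearMap.comp_apply, ← LinearMap.comp_apply F G,
          ← hGF, LinearMap.comp_apply]
    _ = (c - casimirShift c₀ m) • G v := by rw [hv, map_smul]

theorem card_le_finrank_of_subset_casimirSpectrum [FiniteDimensional ℂ (V m)] {S : Finset ℂ}
    (hS : ↑S ⊆ casimirSpectrum E F c₀ V m) : S.card ≤ finrank ℂ (V m) := by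
  choose v hvV hv0 hv using fun c : S => hS c.2
  have hli : LinearIndependent ℂ v :=
    Module.End.eigenvectors_linearIndependent' (F ∘ₗ E) (fun c : S => (c : ℂ) - casimirShift c₀ m)
      (fun c d h => Subtype.ext (sub_left_inj.mp h)) v
      fun c => Module.End.hasEigenvector_iff.mpr ⟨Module.End.mem_eigenspace_iff.mpr (hv c), hv0 c⟩
  have hliV : LinearIndependent ℂ fun c : S => (⟨v c, hvV c⟩ : V m) :=
    LinearIndependent.of_comp (V m).subtype hli
  simpa using hliV.fintype_card_le_finrank

end Casimir

theorem unbounded_multiplicities_general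
    (t : ℕ) (c₀ : ℂ)
    (M : Type*) [AddCommGroup M] [Module ℂ M]
    (W : ℤ × (Fin t → ℤ) → Submodule ℂ M)
    (hfd : ∀ p, FiniteDimensional ℂ (W p))
    (E F : M →ₗ[ℂ] M) (X : Fin t → (M →ₗ[ℂ] M))
    (hE : ∀ (m : ℤ) (n : Fin t → ℤ), ∀ v ∈ W (m, n), E v ∈ W (m + 1, n))
    (hF : ∀ (m : ℤ) (n : Fin t → ℤ), ∀ v ∈ W (m, n), F v ∈ W (m - 1, n))
    (hX : ∀ (i : Fin t) (m : ℤ) (n : Fin t → ℤ), ∀ v ∈ W (m, n),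
      X i v ∈ W (m, n + Pi.single i 1))
    (hcomm : ∀ (m : ℤ) (n : Fin t → ℤ), ∀ v ∈ W (m, n),
      E (F v) - F (E v) = (c₀ + 2 * (m : ℂ)) • v)
    (hXE : ∀ i, (X i).comp E = E.comp (X i))
    (hXF : ∀ i, (X i).comp F = F.comp (X i))
    (hFinj : Function.Injective F)
    (hXinj : ∀ i, Function.Injective (X i))
    (hbdd : ∀ n : Fin t → ℤ, BddAbove {m : ℤ | W (m, n) ≠ ⊥})
    (s : ℕ → ℤ) (hs : StrictMono s)
    (hnz : ∀ j, W (s j, fun _ => s j + 1) ≠ ⊥) :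
    ∀ N : ℕ, ∃ (m : ℤ) (n : Fin t → ℤ), N ≤ Module.finrank ℂ (W (m, n)) := by
  have hmono : Monotone fun n => casimirSpectrum E F c₀ (fun m => W (m, n)) (s 0) :=
    monotone_of_le_add_single fun n i =>
      casimirSpectrum_subset_of_commute (hX i (s 0) n) (hXE i) (hXF i) (hXinj i)
  have hμ : ∀ j, ∃ μ, s j ≤ μ ∧
      casimirShift c₀ μ ∈ casimirSpectrum E F c₀ (fun m => W (m, fun _ => s j + 1)) (s 0) := by
    intro j
    obtain ⟨c, hc⟩ := casimirSpectrum_nonempty (c₀ := c₀) (hE · _) (hF · _) (hnz j)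
    obtain ⟨μ, hle, rfl⟩ :=
      exists_eq_casimirShift_of_mem_casimirSpectrum (hE · _) (hcomm · _) (hbdd _) hc
    exact ⟨μ, hle, casimirSpectrum_antitone (hF · _) (hcomm · _) hFinj
      (hs.monotone (Nat.zero_le j)) hc⟩
  choose μ hsμ hμ using hμ
  intro N
  obtain ⟨T, hTR, hTcard⟩ := (infinite_setOf_lt_inter_range hs hsμ ‖c₀‖).exists_subset_card_eq N
  choose! j hj using fun a (ha : a ∈ T) => (hTR ha).2
  refine ⟨s 0, fun _ => s (T.sup j) + 1, ?_⟩
  have hTsub : ↑(T.image (casimirShift c₀)) ⊆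
      casimirSpectrum E F c₀ (fun m => W (m, fun _ => s (T.sup j) + 1)) (s 0) := by
    rw [Finset.coe_image]
    rintro _ ⟨a, ha, rfl⟩
    rw [← hj a ha]
    exact hmono (fun _ => by simpa using hs.monotone (Finset.le_sup ha)) (hμ (j a))
  calc N = (T.image (casimirShift c₀)).card := by
        rw [Finset.card_image_of_injOn ((casimirShift_injOn c₀).mono fun a ha => (hTR ha).1),
          hTcard]
    _ ≤ _ := card_le_finrank_of_subset_casimirSpectrum hTsub

/-- Operator-theoretic form of the paper's key unboundedness theorem (Theorem 3.4),
proved via the `sl₂` Casimir eigenvalue analysis: for a `ℤ × ℤᵗ`-graded complex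
vector space `M` with finite-dimensional components, carrying operators `E`, `F`
(raising/lowering the first degree, with `[E,F]` acting on the `(m,n⃗)`-component
as the scalar `c₀ + 2m`) and injective operators `X₁, …, X_t` (raising the other
degrees) commuting with `E` and `F`, if `F` is injective, for every `n⃗` the set of
first degrees of nonzero components is bounded above, and there are positive integers
`s₁ < s₂ < ⋯` with `M_{(sₙ, (sₙ+1,…,sₙ+1))} ≠ 0`, then the dimensions of the
components of `M` are unbounded. -/
theorem unbounded_multiplicities
    (t : ℕ) (ht : 0 < t) (c₀ : ℂ)
    (M : Type*) [AddCommGroup M] [Module ℂ M]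
    (W : ℤ × (Fin t → ℤ) → Submodule ℂ M)
    (hinternal : DirectSum.IsInternal W)
    (hfd : ∀ p, FiniteDimensional ℂ (W p))
    (E F : M →ₗ[ℂ] M) (X : Fin t → (M →ₗ[ℂ] M))
    (hE : ∀ (m : ℤ) (n : Fin t → ℤ), ∀ v ∈ W (m, n), E v ∈ W (m + 1, n))
    (hF : ∀ (m : ℤ) (n : Fin t → ℤ), ∀ v ∈ W (m, n), F v ∈ W (m - 1, n))
    (hX : ∀ (i : Fin t) (m : ℤ) (n : Fin t → ℤ), ∀ v ∈ W (m, n),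
      X i v ∈ W (m, n + Pi.single i 1))
    (hcomm : ∀ (m : ℤ) (n : Fin t → ℤ), ∀ v ∈ W (m, n),
      E (F v) - F (E v) = (c₀ + 2 * (m : ℂ)) • v)
    (hXE : ∀ i, (X i).comp E = E.comp (X i))
    (hXF : ∀ i, (X i).comp F = F.comp (X i))
    (hFinj : Function.Injective F)
    (hXinj : ∀ i, Function.Injective (X i))
    (hbdd : ∀ n : Fin t → ℤ, BddAbove {m : ℤ | W (m, n) ≠ ⊥})
    (s : ℕ → ℤ) (hs : StrictMono s) (hspos : ∀ j, 0 < s j)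
    (hnz : ∀ j, W (s j, fun _ => s j + 1) ≠ ⊥) :
    ∀ N : ℕ, ∃ (m : ℤ) (n : Fin t → ℤ), N ≤ Module.finrank ℂ (W (m, n)) :=
  unbounded_multiplicities_general t c₀ M W hfd E F X hE hF hX hcomm hXE hXF hFinj hXinj hbdd s hs
    hnz
end

section
/- For the root system R of type A(2k,2ℓ−1)^{(2)}: for all 1 ≤ i ≤ k, 1 ≤ p ≤ ℓ and σ, τ ∈ {−1,1}, there exist α̇, β̇ ∈ V such that σ ε_i + τ δ_p = α̇ + β̇ and: (a) for every m ∈ ℤ, the vectors 2α̇ + 2mδ and −2α̇ + 2mδ lie in R₀(1)^× and satisfy B(γ,γ) ≠ 0; (b) for every m ∈ ℤ, the vectors 2β̇ + (2m+1)δ and −2β̇ + (2m+1)δ lie in R₀(2)^× and satisfy B(γ,γ) ≠ 0; (c) for every m ∈ ℤ, neither 2α̇ + 2β̇ + mδ nor 2α̇ − 2β̇ + mδ belongs to R. (Remark 2.1(i) of the paper for this type, where r = 1.) -/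
/-- The ambient real vector space with basis `δ, ε₁, …, ε_k, δ₁, …, δ_ℓ`. -/
abbrev Vkl (k l : ℕ) := ℝ × (Fin k → ℝ) × (Fin l → ℝ)

/-- The basis vector `δ`. -/
def del {k l : ℕ} : Vkl k l := (1, 0, 0)

/-- The basis vector `ε_i`. -/
def eps {k l : ℕ} (i : Fin k) : Vkl k l := (0, Pi.single i 1, 0)

/-- The basis vector `δ_j`. -/
def dl {k l : ℕ} (j : Fin l) : Vkl k l := (0, 0, Pi.single j 1)

/-- The symmetric bilinear form with `B(δ,·) = 0`, `B(ε_i,ε_r) = δ_{ir}`,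
`B(δ_j,δ_s) = -δ_{js}` and `B(ε_i,δ_j) = 0`. -/
def B {k l : ℕ} (v w : Vkl k l) : ℝ :=
  (∑ i, v.2.1 i * w.2.1 i) - (∑ j, v.2.2 j * w.2.2 j)

/-- The set of signs `{1, -1}`. -/
def sgns : Set ℝ := {1, -1}

/-- The root system of the twisted affine Lie superalgebra `A(2k,2ℓ-1)⁽²⁾`. -/
def RootsA2 (k l : ℕ) : Set (Vkl k l) :=
  {v | ∃ m : ℤ, v = m • del} ∪
  {v | ∃ (m : ℤ) (σ : ℝ) (i : Fin k), σ ∈ sgns ∧ v = m • del + σ • eps i} ∪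
  {v | ∃ (m : ℤ) (σ : ℝ) (j : Fin l), σ ∈ sgns ∧ v = m • del + σ • dl j} ∪
  {v | ∃ (m : ℤ) (σ τ : ℝ) (i r : Fin k), σ ∈ sgns ∧ τ ∈ sgns ∧ i ≠ r ∧
    v = m • del + σ • eps i + τ • eps r} ∪
  {v | ∃ (m : ℤ) (σ τ : ℝ) (j s : Fin l), σ ∈ sgns ∧ τ ∈ sgns ∧ j ≠ s ∧
    v = m • del + σ • dl j + τ • dl s} ∪
  {v | ∃ (m : ℤ) (σ τ : ℝ) (i : Fin k) (j : Fin l), σ ∈ sgns ∧ τ ∈ sgns ∧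
    v = m • del + σ • eps i + τ • dl j} ∪
  {v | ∃ (m : ℤ) (σ : ℝ) (i : Fin k), σ ∈ sgns ∧
    v = (2 * m + 1) • del + σ • ((2 : ℝ) • eps i)} ∪
  {v | ∃ (m : ℤ) (σ : ℝ) (j : Fin l), σ ∈ sgns ∧
    v = (2 * m) • del + σ • ((2 : ℝ) • dl j)}

/-- The nonzero roots of the first affine component of the even part,
for type `A(2k,2ℓ-1)⁽²⁾`. -/
def R01x (k l : ℕ) : Set (Vkl k l) :=
  {v | ∃ (m : ℤ) (σ τ : ℝ) (j s : Fin l), σ ∈ sgns ∧ τ ∈ sgns ∧ j ≠ s ∧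
    v = m • del + σ • dl j + τ • dl s} ∪
  {v | ∃ (m : ℤ) (σ : ℝ) (j : Fin l), σ ∈ sgns ∧
    v = (2 * m) • del + σ • ((2 : ℝ) • dl j)}

/-- The nonzero roots of the second affine component of the even part,
for type `A(2k,2ℓ-1)⁽²⁾`. -/
def R02x (k l : ℕ) : Set (Vkl k l) :=
  {v | ∃ (m : ℤ) (σ : ℝ) (i : Fin k), σ ∈ sgns ∧ v = m • del + σ • eps i} ∪
  {v | ∃ (m : ℤ) (σ τ : ℝ) (i r : Fin k), σ ∈ sgns ∧ τ ∈ sgns ∧ i ≠ r ∧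
    v = m • del + σ • eps i + τ • eps r} ∪
  {v | ∃ (m : ℤ) (σ : ℝ) (i : Fin k), σ ∈ sgns ∧
    v = (2 * m + 1) • del + σ • ((2 : ℝ) • eps i)}

lemma notin_roots {k l : ℕ} (i : Fin k) (p : Fin l) (a b : ℝ)
    (ha : a ∈ sgns) (hb : b ∈ sgns) (m : ℤ) (w : Vkl k l)
    (hw : w = m • del + (2*a) • eps i + (2*b) • dl p) : w ∉ RootsA2 k l := by
  intro h
  have hw1 : w.2.1 i = 2*a := by
    rw [hw]; simp [del, eps, dl]
  have hw2 : w.2.2 p = 2*b := by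
    rw [hw]; simp [del, eps, dl]
  rcases h with (((((((⟨m', e⟩|⟨m',σ',i',hs,e⟩)|⟨m',σ',j,hs,e⟩)|⟨m',σ',τ',i',r,hs,ht,hne,e⟩)|⟨m',σ',τ',j,s,hs,ht,hne,e⟩)|⟨m',σ',τ',i',j,hs,ht,e⟩)|⟨m',σ',i',hs,e⟩)|⟨m',σ',j,hs,e⟩)
  · rw [e] at hw2
    simp [del] at hw2
    rcases hb with h | h <;> rw [h] at hw2 <;> norm_num at hw2
  · rw [e] at hw2
    simp [del, eps] at hw2
    rcases hb with h | h <;> rw [h] at hw2 <;> norm_num at hw2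
  · rw [e] at hw1
    simp [del, dl] at hw1
    rcases ha with h | h <;> rw [h] at hw1 <;> norm_num at hw1
  · rw [e] at hw2
    simp [del, eps] at hw2
    rcases hb with h | h <;> rw [h] at hw2 <;> norm_num at hw2
  · rw [e] at hw1
    simp [del, dl] at hw1
    rcases ha with h | h <;> rw [h] at hw1 <;> norm_num at hw1
  · rw [e] at hw1
    simp [del, eps, dl, Pi.single_apply] at hw1
    rcases ha with h | h <;> rcases hs with h' | h' <;> rw [h, h'] at hw1 <;>
      split_ifs at hw1 <;> norm_num at hw1
  · rw [e] at hw2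
    simp [del, eps] at hw2
    rcases hb with h | h <;> rw [h] at hw2 <;> norm_num at hw2
  · rw [e] at hw1
    simp [del, dl] at hw1
    rcases ha with h | h <;> rw [h] at hw1 <;> norm_num at hw1

/-- Remark 2.1(i) of the paper for type `A(2k,2ℓ-1)⁽²⁾` (with `r = 1`): every
nonsingular `σε_i + τδ_p` decomposes as `α̇ + β̇` where `±2α̇ + 2ℤδ` consists of
real roots of `R₀(1)`, `±2β̇ + (2ℤ+1)δ` consists of real roots of `R₀(2)`, and
`2α̇ ± 2β̇ + ℤδ` avoids `R`. -/
theorem remark_i_A2 (k l : ℕ) (i : Fin k) (p : Fin l) (σ τ : ℝ)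
    (hσ : σ ∈ sgns) (hτ : τ ∈ sgns) :
    ∃ αd βd : Vkl k l,
      σ • eps i + τ • dl p = αd + βd ∧
      (∀ m : ℤ,
        ((2 : ℝ) • αd + (2 * m) • del ∈ R01x k l ∧
          B ((2 : ℝ) • αd + (2 * m) • del) ((2 : ℝ) • αd + (2 * m) • del) ≠ 0) ∧
        (-((2 : ℝ) • αd) + (2 * m) • del ∈ R01x k l ∧
          B (-((2 : ℝ) • αd) + (2 * m) • del) (-((2 : ℝ) • αd) + (2 * m) • del) ≠ 0)) ∧
      (∀ m : ℤ,
        ((2 : ℝ) • βd + (2 * m + 1) • del ∈ R02x k l ∧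
          B ((2 : ℝ) • βd + (2 * m + 1) • del) ((2 : ℝ) • βd + (2 * m + 1) • del) ≠ 0) ∧
        (-((2 : ℝ) • βd) + (2 * m + 1) • del ∈ R02x k l ∧
          B (-((2 : ℝ) • βd) + (2 * m + 1) • del)
            (-((2 : ℝ) • βd) + (2 * m + 1) • del) ≠ 0)) ∧
      (∀ m : ℤ,
        (2 : ℝ) • αd + (2 : ℝ) • βd + m • del ∉ RootsA2 k l ∧
        (2 : ℝ) • αd - (2 : ℝ) • βd + m • del ∉ RootsA2 k l) := by
  refine ⟨τ • dl p, σ • eps i, by module, ?_, ?_, ?_⟩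
  · intro m
    have hmem : ∀ c : ℝ, c ∈ sgns →
        (c • ((2:ℝ) • (dl p : Vkl k l)) + (2 * m) • del ∈ R01x k l ∧
          B (c • ((2:ℝ) • (dl p : Vkl k l)) + (2 * m) • del)
            (c • ((2:ℝ) • dl p) + (2 * m) • del) ≠ 0) := by
      intro c hc
      constructor
      · right; exact ⟨m, c, p, hc, by module⟩
      · rcases hc with h | h <;> subst h <;>
          simp [B, del, dl, Pi.single_apply, Finset.sum_ite_eq']
    constructor
    · have := hmem τ hτ
      have e : (2:ℝ) • (τ • (dl p : Vkl k l)) + (2 * m) • del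
          = τ • ((2:ℝ) • dl p) + (2 * m) • del := by module
      rw [e]; exact this
    · have := hmem (-τ) (by rcases hτ with h | h <;> subst h <;> simp [sgns])
      have e : -((2:ℝ) • (τ • (dl p : Vkl k l))) + (2 * m) • del
          = (-τ) • ((2:ℝ) • dl p) + (2 * m) • del := by module
      rw [e]; exact this
  · intro m
    have hmem : ∀ c : ℝ, c ∈ sgns →
        (c • ((2:ℝ) • (eps i : Vkl k l)) + (2 * m + 1) • del ∈ R02x k l ∧
          B (c • ((2:ℝ) • (eps i : Vkl k l)) + (2 * m + 1) • del)
            (c • ((2:ℝ) • eps i) + (2 * m + 1) • del) ≠ 0) := by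
      intro c hc
      constructor
      · exact Or.inr ⟨m, c, i, hc, by module⟩
      · rcases hc with h | h <;> subst h <;>
          simp [B, del, eps, Pi.single_apply, Finset.sum_ite_eq']
    constructor
    · have := hmem σ hσ
      have e : (2:ℝ) • (σ • (eps i : Vkl k l)) + (2 * m + 1) • del
          = σ • ((2:ℝ) • eps i) + (2 * m + 1) • del := by module
      rw [e]; exact this
    · have := hmem (-σ) (by rcases hσ with h | h <;> subst h <;> simp [sgns])
      have e : -((2:ℝ) • (σ • (eps i : Vkl k l))) + (2 * m + 1) • del
          = (-σ) • ((2:ℝ) • eps i) + (2 * m + 1) • del := by module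
      rw [e]; exact this
  · intro m
    constructor
    · exact notin_roots i p σ τ hσ hτ m _ (by module)
    · exact notin_roots i p (-σ) τ
        (by rcases hσ with h | h <;> subst h <;> simp [sgns]) hτ m _ (by module)
end
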